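/- arXiv:0912.0147 — 7 statements merged into one kernel-verified Lean document; each statement's English description precedes it below -/
import Mathlib

section
/- For every integer n > 6, there exist two distinct odd primes p and q with p < n, q < n, and gcd(pq, n) = 1. -/
lemma aux_odd_prime (b : ℕ) (h2 : 2 ≤ b) (hodd : Odd b) :
    ∃ p, p.Prime ∧ Odd p ∧ p ∣ b := by
  have hp := Nat.minFac_prime (show b ≠ 1 by omega)
  refine ⟨b.minFac, hp, hp.odd_of_ne_two ?_, Nat.minFac_dvd b⟩
  intro h
  have hd : 2 ∣ b := h ▸ Nat.minFac_dvd b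
  rw [Nat.odd_iff] at hodd
  omega

theorem stmt_0 (n : ℕ) (hn : 6 < n) :
    ∃ p q : ℕ, p.Prime ∧ q.Prime ∧ p ≠ q ∧ Odd p ∧ Odd q ∧
      p < n ∧ q < n ∧ Nat.gcd (p * q) n = 1 := by
  rcases Nat.even_or_odd n with hev | hodd
  · -- n even
    rw [Nat.even_iff] at hev
    by_cases h3 : 3 ∣ n
    · -- 6 ∣ n, n ≥ 12
      have h12 : 12 ≤ n := by omega
      set k := n / 3 with hkdef
      have hk : 3 * k = n := by omega
      have hk4 : 4 ≤ k := by omega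
      have hke : 2 ∣ k := by omega
      obtain ⟨q, hq, hq1, hq2⟩ := Nat.exists_prime_lt_and_le_two_mul k (by omega)
      obtain ⟨p, hp, hpo, hpd⟩ := aux_odd_prime (n - 1) (by omega) (by rw [Nat.odd_iff]; omega)
      have hqo : Odd q := hq.odd_of_ne_two (by omega)
      have hpn : ¬ p ∣ n := by
        intro h
        have h1 : p ∣ n - (n - 1) := Nat.dvd_sub h hpd
        have h2 : n - (n - 1) = 1 := by omega
        rw [h2] at h1
        exact hp.one_lt.ne' (Nat.dvd_one.mp h1)
      have hqn : ¬ q ∣ n := by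
        intro h
        rw [← hk] at h
        rcases (Nat.Prime.dvd_mul hq).mp h with h | h
        · have := Nat.le_of_dvd (by norm_num) h; omega
        · have := Nat.le_of_dvd (by omega) h; omega
      have hpq : p ≠ q := by
        rintro rfl
        obtain ⟨t, ht⟩ := hpd
        have ht3 : t < 3 := by
          by_contra hcon
          push_neg at hcon
          have : p * 3 ≤ p * t := Nat.mul_le_mul_left p hcon
          omega
        interval_cases t <;> omega
      refine ⟨p, q, hp, hq, hpq, hpo, hqo, ?_, ?_, ?_⟩
      · exact lt_of_le_of_lt (Nat.le_of_dvd (by omega) hpd) (by omega)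
      · omega
      · exact Nat.Coprime.mul (hp.coprime_iff_not_dvd.mpr hpn)
          (hq.coprime_iff_not_dvd.mpr hqn)
    · -- n even, 3 ∤ n : use factors of n-1 and n-3
      obtain ⟨p, hp, hpo, hpd⟩ := aux_odd_prime (n - 1) (by omega) (by rw [Nat.odd_iff]; omega)
      obtain ⟨q, hq, hqo, hqd⟩ := aux_odd_prime (n - 3) (by omega) (by rw [Nat.odd_iff]; omega)
      have hpn : ¬ p ∣ n := by
        intro h
        have h1 : p ∣ n - (n - 1) := Nat.dvd_sub h hpd
        have h2 : n - (n - 1) = 1 := by omega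
        rw [h2] at h1
        exact hp.one_lt.ne' (Nat.dvd_one.mp h1)
      have hqn : ¬ q ∣ n := by
        intro h
        have h1 : q ∣ n - (n - 3) := Nat.dvd_sub h hqd
        have h2 : n - (n - 3) = 3 := by omega
        rw [h2] at h1
        have h4 := Nat.le_of_dvd (by norm_num) h1
        have h5 := hq.two_le
        rw [Nat.odd_iff] at hqo
        have : q = 3 := by omega
        subst this
        exact h3 h
      have hpq : p ≠ q := by
        rintro rfl
        have h1 : p ∣ (n - 1) - (n - 3) := Nat.dvd_sub hpd hqd
        have h2 : (n - 1) - (n - 3) = 2 := by omega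
        rw [h2] at h1
        have := Nat.le_of_dvd (by norm_num) h1
        have := hp.two_le
        rw [Nat.odd_iff] at hpo
        omega
      refine ⟨p, q, hp, hq, hpq, hpo, hqo, ?_, ?_, ?_⟩
      · exact lt_of_le_of_lt (Nat.le_of_dvd (by omega) hpd) (by omega)
      · exact lt_of_le_of_lt (Nat.le_of_dvd (by omega) hqd) (by omega)
      · exact Nat.Coprime.mul (hp.coprime_iff_not_dvd.mpr hpn)
          (hq.coprime_iff_not_dvd.mpr hqn)
  · -- n odd : use factors of n-2 and n-4
    rw [Nat.odd_iff] at hodd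
    obtain ⟨p, hp, hpo, hpd⟩ := aux_odd_prime (n - 2) (by omega) (by rw [Nat.odd_iff]; omega)
    obtain ⟨q, hq, hqo, hqd⟩ := aux_odd_prime (n - 4) (by omega) (by rw [Nat.odd_iff]; omega)
    have hpn : ¬ p ∣ n := by
      intro h
      have h1 : p ∣ n - (n - 2) := Nat.dvd_sub h hpd
      have h2 : n - (n - 2) = 2 := by omega
      rw [h2] at h1
      have := Nat.le_of_dvd (by norm_num) h1
      have := hp.two_le
      rw [Nat.odd_iff] at hpo
      omega
    have hqn : ¬ q ∣ n := by
      intro h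
      have h1 : q ∣ n - (n - 4) := Nat.dvd_sub h hqd
      have h2 : n - (n - 4) = 4 := by omega
      rw [h2, show (4 : ℕ) = 2 * 2 from rfl] at h1
      rw [Nat.odd_iff] at hqo
      have h5 := hq.two_le
      rcases (Nat.Prime.dvd_mul hq).mp h1 with h | h <;>
        · have := Nat.le_of_dvd (by norm_num) h; omega
    have hpq : p ≠ q := by
      rintro rfl
      have h1 : p ∣ (n - 2) - (n - 4) := Nat.dvd_sub hpd hqd
      have h2 : (n - 2) - (n - 4) = 2 := by omega
      rw [h2] at h1
      have := Nat.le_of_dvd (by norm_num) h1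
      have := hp.two_le
      rw [Nat.odd_iff] at hpo
      omega
    refine ⟨p, q, hp, hq, hpq, hpo, hqo, ?_, ?_, ?_⟩
    · exact lt_of_le_of_lt (Nat.le_of_dvd (by omega) hpd) (by omega)
    · exact lt_of_le_of_lt (Nat.le_of_dvd (by omega) hqd) (by omega)
    · exact Nat.Coprime.mul (hp.coprime_iff_not_dvd.mpr hpn)
        (hq.coprime_iff_not_dvd.mpr hqn)
end

section
/- For every integer m ≥ 4 with m ≠ 5, there exist at least two distinct primes p, q with m < p < 2m and m < q < 2m. -/
/-!
Erdős's proof of Bertrand's postulate, allowing one prime in `(n, 2n]`. In the factorization of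
`centralBinom n`, the primes `p ≤ √(2n)` contribute at most `2n` each, those in `(√(2n), 2n/3]`
at most their product `≤ 4^(2n/3)`, those in `(2n/3, n]` nothing, and each prime in `(n, 2n]`
at most `2n`. With at most one prime in `(n, 2n]` this gives
`4^n < n · centralBinom n ≤ n (2n)^(√(2n)+1) 4^(2n/3)`, which fails for `n ≥ 512`: the logarithm
of the ratio of the two sides is a concave function of `2n`, nonnegative at `36` and negative at
`1024`. Below `512`, a pair of primes `p < q < 2a` covers every `m` with `a ≤ m < p`.
-/

section

open Real

theorem concaveOn_sqrt_add_two_mul_log_sub :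
    ConcaveOn ℝ (Set.Ioi 1) fun y : ℝ => (√y + 2) * log y - (y / 3 + 1) * log 2 := by
  have hlog : ConcaveOn ℝ (Set.Ioi 1) fun y : ℝ => 2 * log y :=
    (strictConcaveOn_log_Ioi.concaveOn.subset (Set.Ioi_subset_Ioi zero_le_one)
      (convex_Ioi 1)).smul zero_le_two
  have hlin : ConvexOn ℝ (Set.Ioi 1) fun y : ℝ => (y / 3 + 1) * log 2 :=
    (((convexOn_id (convex_Ioi 1)).smul (by positivity : 0 ≤ log 2 / 3)).add_const
      (log 2)).congr fun y _ => by simp only [Pi.add_apply, id, smul_eq_mul]; ring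
  exact ((strictConcaveOn_sqrt_mul_log_Ioi.concaveOn.add hlog).sub hlin).congr
    fun y _ => by simp only [Pi.add_apply, Pi.sub_apply]; ring

theorem sqrt_add_two_mul_log_sub_nonpos {y : ℝ} (hy : 1024 ≤ y) :
    (√y + 2) * log y - (y / 3 + 1) * log 2 ≤ 0 := by
  have hlog2 := log_pos one_lt_two
  have h36 : 0 ≤ (√36 + 2) * log 36 - (36 / 3 + 1) * log 2 := by
    have h6 : √36 = 6 := by rw [show (36 : ℝ) = 6 ^ 2 by norm_num, sqrt_sq (by norm_num)]
    have h4 : log 4 = 2 * log 2 := by rw [show (4 : ℝ) = 2 ^ 2 by norm_num, log_pow]; norm_num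
    have : log 4 ≤ log 36 := log_le_log (by norm_num) (by norm_num)
    rw [h6]
    linarith
  have h1024 : (√1024 + 2) * log 1024 - (1024 / 3 + 1) * log 2 ≤ 0 := by
    have h32 : √1024 = 32 := by rw [show (1024 : ℝ) = 32 ^ 2 by norm_num, sqrt_sq (by norm_num)]
    have h10 : log 1024 = 10 * log 2 := by
      rw [show (1024 : ℝ) = 2 ^ 10 by norm_num, log_pow]; norm_num
    rw [h32, h10]
    linarith
  have hconc := concaveOn_sqrt_add_two_mul_log_sub
  exact (hconc.right_le_of_le_left'' (by norm_num : (36 : ℝ) ∈ Set.Ioi 1)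
    (by simp only [Set.mem_Ioi]; linarith) (by norm_num) hy (h1024.trans h36)).trans h1024

theorem real_main_inequality_two_primes {x : ℝ} (hx : 512 ≤ x) :
    x * (2 * x) ^ (√(2 * x) + 1) * 4 ^ (2 * x / 3) ≤ 4 ^ x := by
  have hx0 : 0 < x := by linarith
  have h4 : log 4 = 2 * log 2 := by rw [show (4 : ℝ) = 2 ^ 2 by norm_num, log_pow]; norm_num
  have key : log (x * (2 * x) ^ (√(2 * x) + 1) * 4 ^ (2 * x / 3)) - log (4 ^ x) =
      (√(2 * x) + 2) * log (2 * x) - (2 * x / 3 + 1) * log 2 := by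
    rw [log_mul (by positivity) (by positivity), log_mul (by positivity) (by positivity),
      log_rpow (by positivity), log_rpow (by positivity), log_rpow (by positivity), h4,
      log_mul two_ne_zero hx0.ne']
    ring
  rw [← log_le_log_iff (by positivity) (by positivity)]
  linarith [sqrt_add_two_mul_log_sub_nonpos (by linarith : 1024 ≤ 2 * x)]

end

open Finset Nat

theorem prod_filter_prime_pow_factorization (m : ℕ) (s : Finset ℕ) :
    ∏ p ∈ s with p.Prime, p ^ m.factorization p = ∏ p ∈ s, p ^ m.factorization p :=
  prod_filter_of_ne fun p _ h =>
    by_contra fun hp => h (by simp [factorization_eq_zero_of_not_prime m hp])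

theorem prod_pow_factorization_centralBinom_le_pow_card {n : ℕ} (hn : n ≠ 0) (s : Finset ℕ) :
    ∏ p ∈ s, p ^ (centralBinom n).factorization p ≤ (2 * n) ^ #{p ∈ s | p.Prime} := by
  rw [← prod_filter_prime_pow_factorization]
  exact prod_le_pow_card _ _ _ fun p _ => pow_factorization_choose_le (by omega)

theorem prod_range_pow_factorization_centralBinom_le {n : ℕ} (hn : n ≠ 0) :
    ∏ p ∈ range (2 * n / 3 + 1), p ^ (centralBinom n).factorization p ≤
      (2 * n) ^ (2 * n).sqrt * 4 ^ (2 * n / 3) := by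
  rw [← prod_filter_mul_prod_filter_not _ (· ≤ (2 * n).sqrt)]
  gcongr ?_ * ?_
  · have hcard : #{p ∈ {p ∈ range (2 * n / 3 + 1) | p ≤ (2 * n).sqrt} | p.Prime} ≤
        (2 * n).sqrt := by
      refine (card_le_card fun p hp => ?_).trans (Nat.card_Icc 1 _).le
      simp only [mem_filter] at hp
      exact mem_Icc.2 ⟨hp.2.one_lt.le, hp.1.2⟩
    exact (prod_pow_factorization_centralBinom_le_pow_card hn _).trans
      (Nat.pow_le_pow_right (by omega) hcard)
  · rw [← prod_filter_prime_pow_factorization]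
    calc _ ≤ ∏ p ∈ {p ∈ range (2 * n / 3 + 1) | ¬p ≤ (2 * n).sqrt} with p.Prime, p := by
          refine prod_le_prod' fun p hp => ?_
          simp only [mem_filter, not_le] at hp
          exact (Nat.pow_le_pow_right hp.2.pos
            (factorization_choose_le_one (Nat.sqrt_lt'.1 hp.1.2))).trans (pow_one p).le
      _ ≤ primorial (2 * n / 3) :=
          prod_le_prod_of_subset_of_one_le' (filter_subset_filter _ (filter_subset _ _))
            fun p hp _ => (mem_filter.1 hp).2.one_lt.le
      _ ≤ 4 ^ (2 * n / 3) := primorial_le_four_pow _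

theorem centralBinom_le_mul_pow_card_primes {n : ℕ} (hn : 2 < n) :
    centralBinom n ≤
      (2 * n) ^ (2 * n).sqrt * 4 ^ (2 * n / 3) *
        (2 * n) ^ #{p ∈ Ioc n (2 * n) | p.Prime} := by
  have hmiddle : ∏ p ∈ range (n + 1), p ^ (centralBinom n).factorization p =
      ∏ p ∈ range (2 * n / 3 + 1), p ^ (centralBinom n).factorization p := by
    refine (prod_subset (range_subset_range.2 (by omega)) fun p hp hp' => ?_).symm
    simp only [mem_range] at hp hp'
    rw [factorization_centralBinom_of_two_mul_self_lt_three_mul hn (by omega) (by omega), pow_zero]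
  rw [← prod_pow_factorization_centralBinom,
    ← prod_range_mul_prod_Ico _ (by omega : n + 1 ≤ 2 * n + 1),
    Ico_add_one_add_one_eq_Ioc, hmiddle]
  exact mul_le_mul' (prod_range_pow_factorization_centralBinom_le (by omega))
    (prod_pow_factorization_centralBinom_le_pow_card (by omega) _)

theorem main_inequality_two_primes {n : ℕ} (hn : 512 ≤ n) :
    n * (2 * n) ^ ((2 * n).sqrt + 1) * 4 ^ (2 * n / 3) ≤ 4 ^ n := by
  rw [← @Nat.cast_le ℝ]
  simp only [Nat.cast_mul, Nat.cast_pow, Nat.cast_add, Nat.cast_one, Nat.cast_ofNat,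
    ← Real.rpow_natCast]
  refine _root_.trans ?_ (real_main_inequality_two_primes (by exact_mod_cast hn))
  gcongr
  · exact_mod_cast (by omega : 1 ≤ 2 * n)
  · exact_mod_cast Real.nat_sqrt_le_real_sqrt
  · norm_num
  · exact Nat.cast_div_le.trans (by norm_cast)

theorem two_le_card_primes_Ioc {n : ℕ} (hn : 512 ≤ n) :
    2 ≤ #{p ∈ Ioc n (2 * n) | p.Prime} := by
  by_contra! hcard
  have hbinom : centralBinom n ≤ (2 * n) ^ (2 * n).sqrt * 4 ^ (2 * n / 3) * (2 * n) := by
    refine (centralBinom_le_mul_pow_card_primes (by omega)).trans ?_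
    gcongr
    exact (Nat.pow_le_pow_right (by omega) (by omega : _ ≤ 1)).trans (pow_one _).le
  refine (main_inequality_two_primes hn).not_gt ?_
  calc 4 ^ n < n * centralBinom n := four_pow_lt_mul_centralBinom n (by omega)
    _ ≤ n * ((2 * n) ^ (2 * n).sqrt * 4 ^ (2 * n / 3) * (2 * n)) := by gcongr
    _ = n * (2 * n) ^ ((2 * n).sqrt + 1) * 4 ^ (2 * n / 3) := by ring

theorem filter_prime_Ioc_two_mul_eq_Ioo {n : ℕ} (hn : 2 ≤ n) :
    {p ∈ Ioc n (2 * n) | p.Prime} = {p ∈ Ioo n (2 * n) | p.Prime} := by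
  ext p
  simp only [mem_filter, mem_Ioc, mem_Ioo]
  refine ⟨fun ⟨⟨hnp, hp2n⟩, hp⟩ => ⟨⟨hnp, hp2n.lt_of_ne ?_⟩, hp⟩,
    fun ⟨⟨hnp, hp2n⟩, hp⟩ => ⟨⟨hnp, hp2n.le⟩, hp⟩⟩
  rintro rfl
  exact not_prime_mul (by norm_num) (by omega) hp

theorem one_lt_card_primes_Ioo_of_lt {m a p q : ℕ} (hp : p.Prime) (hq : q.Prime) (hpq : p < q)
    (hqa : q < 2 * a) (h : m < a → 1 < #{r ∈ Ioo m (2 * m) | r.Prime}) :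
    m < p → 1 < #{r ∈ Ioo m (2 * m) | r.Prime} := by
  intro hmp
  rcases lt_or_ge m a with hma | ham
  · exact h hma
  · exact one_lt_card.2 ⟨p, by simp [hp]; omega, q, by simp [hq]; omega, hpq.ne⟩

theorem one_lt_card_primes_Ioo_of_lt_521 {m : ℕ} (h4 : 4 ≤ m) (h5 : m ≠ 5) :
    m < 521 → 1 < #{r ∈ Ioo m (2 * m) | r.Prime} := by
  refine one_lt_card_primes_Ioo_of_lt (a := 263) (q := 523) (by norm_num) (by norm_num)
    (by norm_num) (by norm_num) ?_
  refine one_lt_card_primes_Ioo_of_lt (a := 137) (q := 269) (by norm_num) (by norm_num)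
    (by norm_num) (by norm_num) ?_
  refine one_lt_card_primes_Ioo_of_lt (a := 71) (q := 139) (by norm_num) (by norm_num)
    (by norm_num) (by norm_num) ?_
  refine one_lt_card_primes_Ioo_of_lt (a := 37) (q := 73) (by norm_num) (by norm_num)
    (by norm_num) (by norm_num) ?_
  refine one_lt_card_primes_Ioo_of_lt (a := 23) (q := 41) (by norm_num) (by norm_num)
    (by norm_num) (by norm_num) ?_
  refine one_lt_card_primes_Ioo_of_lt (a := 17) (q := 29) (by norm_num) (by norm_num)
    (by norm_num) (by norm_num) ?_
  refine one_lt_card_primes_Ioo_of_lt (a := 11) (q := 19) (by norm_num) (by norm_num)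
    (by norm_num) (by norm_num) ?_
  refine one_lt_card_primes_Ioo_of_lt (a := 7) (q := 13) (by norm_num) (by norm_num)
    (by norm_num) (by norm_num) ?_
  refine one_lt_card_primes_Ioo_of_lt (a := 6) (q := 11) (by norm_num) (by norm_num)
    (by norm_num) (by norm_num) ?_
  intro hm6
  obtain rfl : m = 4 := by omega
  decide

theorem stmt_1 (m : ℕ) (h4 : 4 ≤ m) (h5 : m ≠ 5) :
    ∃ p q : ℕ, p.Prime ∧ q.Prime ∧ p ≠ q ∧
      m < p ∧ p < 2 * m ∧ m < q ∧ q < 2 * m := by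
  have hcard : 1 < #{p ∈ Ioo m (2 * m) | p.Prime} := by
    rcases le_or_gt 512 m with hm | hm
    · rw [← filter_prime_Ioc_two_mul_eq_Ioo (by omega)]
      exact two_le_card_primes_Ioc hm
    · exact one_lt_card_primes_Ioo_of_lt_521 h4 h5 (by omega)
  obtain ⟨p, hp, q, hq, hpq⟩ := one_lt_card.1 hcard
  simp only [mem_filter, mem_Ioo] at hp hq
  exact ⟨p, q, hp.2, hq.2, hpq, hp.1.1, hp.1.2, hq.1.1, hq.1.2⟩
end

section
/- For every positive integer k there exists a positive integer N such that for all n ≥ N, p_{n+1}^k < p_1 · p_2 · ⋯ · p_n, where p_i denotes the i-th prime. -/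
/-!
By Bertrand's postulate each prime is at most twice the previous one, so `p_{n+1} ≤ 2 ^ (n + 1)`,
while `p_i ≥ i + 1` gives `p_1 ⋯ p_n ≥ (n + 1)!`. Hence `p_{n+1} ^ k ≤ (2 ^ k) ^ (n + 1) < (n + 1)!`
for large `n`, since factorials outgrow every geometric sequence.
-/

open Nat

lemma nth_prime_succ_le_two_mul (n : ℕ) : nth Nat.Prime (n + 1) ≤ 2 * nth Nat.Prime n := by
  obtain ⟨p, hp, hlt, hle⟩ :=
    exists_prime_lt_and_le_two_mul (nth Nat.Prime n) (prime_nth_prime n).ne_zero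
  refine le_trans ?_ hle
  by_contra! h
  exact (le_nth_of_lt_nth_succ h hp).not_gt hlt

lemma nth_prime_le_two_pow (n : ℕ) : nth Nat.Prime n ≤ 2 ^ (n + 1) := by
  induction n with
  | zero => simp [nth_prime_zero_eq_two]
  | succ n ih =>
    calc nth Nat.Prime (n + 1) ≤ 2 * nth Nat.Prime n := nth_prime_succ_le_two_mul n
      _ ≤ 2 * 2 ^ (n + 1) := by omega
      _ = 2 ^ (n + 2) := by ring

lemma factorial_succ_le_prod_nth_prime (n : ℕ) :
    (n + 1)! ≤ ∏ i ∈ Finset.range n, nth Nat.Prime i := by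
  induction n with
  | zero => simp
  | succ n ih =>
    rw [Finset.prod_range_succ, factorial_succ, mul_comm]
    exact Nat.mul_le_mul ih (add_two_le_nth_prime n)

theorem stmt_3_general (k : ℕ) :
    ∃ N : ℕ, 0 < N ∧ ∀ n ≥ N,
      (Nat.nth Nat.Prime n) ^ k < ∏ i ∈ Finset.range n, Nat.nth Nat.Prime i := by
  obtain ⟨N, hN⟩ := Filter.eventually_atTop.mp (eventually_pow_lt_factorial_sub (2 ^ k) 0)
  refine ⟨N + 1, N.succ_pos, fun n hn => ?_⟩
  calc nth Nat.Prime n ^ k ≤ (2 ^ (n + 1)) ^ k := Nat.pow_le_pow_left (nth_prime_le_two_pow n) k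
    _ = (2 ^ k) ^ (n + 1) := pow_right_comm _ _ _
    _ < (n + 1)! := hN (n + 1) (by omega)
    _ ≤ ∏ i ∈ Finset.range n, nth Nat.Prime i := factorial_succ_le_prod_nth_prime n

theorem stmt_3 (k : ℕ) (hk : 0 < k) :
    ∃ N : ℕ, 0 < N ∧ ∀ n ≥ N,
      (Nat.nth Nat.Prime n) ^ k < ∏ i ∈ Finset.range n, Nat.nth Nat.Prime i :=
  stmt_3_general k
end

section
/- Define q(m) to be the least prime not dividing m (equivalently, the least prime coprime to m). For every integer k ≥ 1 there exists a positive integer C such that for all integers m ≥ C, q(m)^k < m. -/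
/-!
Every prime below `q(m)` divides `m`, so the primorial `(q(m) - 1)#` divides `m`. By Bertrand's
postulate `(2n)# ≥ (n + 1) · n#`, hence `(2^L)# ≥ 2^(L choose 2)`: the primorial grows faster
than any polynomial, and so `q(m)^k < (q(m) - 1)# ≤ m` once `q(m)` is large.
-/

/-- The least prime not dividing `m`. -/
noncomputable def leastPrimeCoprime (m : ℕ) : ℕ := sInf {p : ℕ | p.Prime ∧ ¬ p ∣ m}

open Finset

theorem primorial_mul_succ_le_primorial_two_mul {n : ℕ} (hn : n ≠ 0) :
    primorial n * (n + 1) ≤ primorial (2 * n) := by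
  obtain ⟨p, hp, hnp, hp2n⟩ := Nat.exists_prime_lt_and_le_two_mul n hn
  rw [two_mul, primorial_add]
  gcongr
  calc n + 1 ≤ p := hnp
    _ ≤ ∏ q ∈ Ico (n + 1) (n + n + 1) with q.Prime, q :=
      single_le_prod' (fun q hq => (mem_filter.1 hq).2.one_lt.le)
        (mem_filter.2 ⟨mem_Ico.2 ⟨hnp, by omega⟩, hp⟩)

theorem two_pow_choose_two_le_primorial_two_pow (L : ℕ) :
    2 ^ L.choose 2 ≤ primorial (2 ^ L) := by
  induction L with
  | zero => simp
  | succ L ih =>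
    calc 2 ^ (L + 1).choose 2 = 2 ^ L.choose 2 * 2 ^ L := by
          rw [Nat.choose_succ_succ', Nat.choose_one_right, pow_add, mul_comm]
      _ ≤ primorial (2 ^ L) * (2 ^ L + 1) := by gcongr; omega
      _ ≤ primorial (2 ^ (L + 1)) := by
          rw [pow_succ']
          exact primorial_mul_succ_le_primorial_two_mul (by positivity)

theorem mul_lt_choose_two {k L : ℕ} (hL : 2 * k + 3 ≤ L) : (L + 1) * k < L.choose 2 := by
  rw [Nat.choose_two_right]
  refine (Nat.le_div_iff_mul_le two_pos).2 ?_
  obtain ⟨t, rfl⟩ := Nat.exists_eq_add_of_le hL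
  rw [show 2 * k + 3 + t - 1 = 2 * k + 2 + t by omega]
  nlinarith

theorem succ_pow_lt_primorial (k : ℕ) {n : ℕ} (hn : 2 ^ (2 * k + 3) ≤ n) :
    (n + 1) ^ k < primorial n := by
  set L := Nat.log 2 n
  have hn0 : n ≠ 0 := Nat.one_le_iff_ne_zero.1 (Nat.one_le_two_pow.trans hn)
  have hL : 2 * k + 3 ≤ L := Nat.le_log_of_pow_le (by norm_num) hn
  calc (n + 1) ^ k ≤ (2 ^ (L + 1)) ^ k := by
        gcongr; exact Nat.lt_pow_succ_log_self (by norm_num) n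
    _ = 2 ^ ((L + 1) * k) := (pow_mul 2 (L + 1) k).symm
    _ < 2 ^ L.choose 2 := Nat.pow_lt_pow_right (by norm_num) (mul_lt_choose_two hL)
    _ ≤ primorial (2 ^ L) := two_pow_choose_two_le_primorial_two_pow L
    _ ≤ primorial n := primorial_mono (Nat.pow_log_le_self 2 hn0)

theorem dvd_of_prime_lt_leastPrimeCoprime {m q : ℕ} (hq : q.Prime)
    (hlt : q < leastPrimeCoprime m) : q ∣ m := by
  by_contra hqm
  exact Nat.notMem_of_lt_sInf hlt ⟨hq, hqm⟩

theorem primorial_pred_leastPrimeCoprime_dvd (m : ℕ) :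
    primorial (leastPrimeCoprime m - 1) ∣ m := by
  refine prod_primes_dvd m (fun q hq => (Nat.mem_primesLE.1 hq).2.prime) fun q hq => ?_
  obtain ⟨hle, hq⟩ := Nat.mem_primesLE.1 hq
  exact dvd_of_prime_lt_leastPrimeCoprime hq (by have := hq.two_le; omega)

theorem stmt_4_general (k : ℕ) :
    ∃ C : ℕ, 0 < C ∧ ∀ m : ℕ, C ≤ m → (leastPrimeCoprime m) ^ k < m := by
  set N := 2 ^ (2 * k + 3)
  refine ⟨N ^ k + 1, by omega, fun m hm => ?_⟩
  set p := leastPrimeCoprime m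
  rcases le_or_gt p N with hp | hp
  · calc p ^ k ≤ N ^ k := Nat.pow_le_pow_left hp k
      _ < m := hm
  · calc p ^ k = (p - 1 + 1) ^ k := by rw [Nat.sub_add_cancel (Nat.one_le_of_lt hp)]
      _ < primorial (p - 1) := succ_pow_lt_primorial k (Nat.le_sub_one_of_lt hp)
      _ ≤ m := Nat.le_of_dvd (by omega) (primorial_pred_leastPrimeCoprime_dvd m)

theorem stmt_4 (k : ℕ) (hk : 1 ≤ k) :
    ∃ C : ℕ, 0 < C ∧ ∀ m : ℕ, C ≤ m → (leastPrimeCoprime m) ^ k < m :=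
  stmt_4_general k
end

section
/- Fix coprime positive integers k, l with 1 ≤ l < k, and let Q_i denote the i-th prime congruent to l modulo k. For every integer h > 1, there exists a positive integer N such that Q_{n+1}^h < Q_1 · Q_2 · ⋯ · Q_n for all n ≥ N. -/
/-!
The analytic input behind Dirichlet's theorem is that `∑_{p ≡ a} log p / p ^ x` equals
`1 / (φ(q) (x - 1)) + O(1)` as `x → 1⁺` (prime powers only add a bounded amount).
Comparing this series at `1 + 2 / log N` and at `1 + 1 / log N` (Rankin's trick) yields the
Mertens-type bound `∑_{p < N, p ≡ a} log p / p ≥ c log N - D` with `c > 0`. Hence, for every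
fixed `M`, `θ(N) := ∑_{p < N, p ≡ a} log p ≥ M ∑_{M ≤ p < N, p ≡ a} log p / p ≥ M c log N - O_M(1)`,
so `θ(N) / log N → ∞`. At `N = Q_{n+1}` this gives `log (Q_1 ⋯ Q_n) ≥ (h + 1) log Q_{n+1}`
for all large `n`.
-/

open Filter Finset Real

section NonnegSeries

variable {f : ℕ → ℝ}

lemma div_rpow_le_div {c x : ℝ} (hc : 0 ≤ c) (hx : 1 ≤ x) (n : ℕ) :
    c / (n : ℝ) ^ x ≤ c / n := by
  rcases n.eq_zero_or_pos with rfl | hn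
  · simp [zero_rpow (by linarith : x ≠ 0)]
  · exact div_le_div_of_nonneg_left hc (by positivity)
      (self_le_rpow_of_one_le (by exact_mod_cast hn) hx)

lemma tsum_div_rpow_le_sum_range_add (hf : ∀ n, 0 ≤ f n) {x y : ℝ} (hyx : y ≤ x)
    (hx : Summable fun n : ℕ ↦ f n / (n : ℝ) ^ x) (hy : Summable fun n : ℕ ↦ f n / (n : ℝ) ^ y)
    {N : ℕ} (hN : 0 < N) :
    ∑' n, f n / (n : ℝ) ^ x ≤
      ∑ n ∈ range N, f n / (n : ℝ) ^ x + (N : ℝ) ^ (y - x) * ∑' n, f n / (n : ℝ) ^ y := by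
  rw [← hx.sum_add_tsum_nat_add N, ← hy.sum_add_tsum_nat_add N]
  gcongr
  have hterm (n : ℕ) : f (n + N) / ((n + N : ℕ) : ℝ) ^ x ≤
      (N : ℝ) ^ (y - x) * (f (n + N) / ((n + N : ℕ) : ℝ) ^ y) := by
    have hpos : (0 : ℝ) < ((n + N : ℕ) : ℝ) := by positivity
    calc f (n + N) / ((n + N : ℕ) : ℝ) ^ x
        = ((n + N : ℕ) : ℝ) ^ (y - x) * (f (n + N) / ((n + N : ℕ) : ℝ) ^ y) := by
          rw [rpow_sub hpos]; field_simp
      _ ≤ _ := mul_le_mul_of_nonneg_right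
          (rpow_le_rpow_of_nonpos (by exact_mod_cast hN) (by push_cast; linarith) (by linarith))
          (div_nonneg (hf _) (by positivity))
  have hy' := (summable_nat_add_iff N).mpr hy
  calc ∑' n, f (n + N) / ((n + N : ℕ) : ℝ) ^ x
      ≤ ∑' n, (N : ℝ) ^ (y - x) * (f (n + N) / ((n + N : ℕ) : ℝ) ^ y) :=
        ((summable_nat_add_iff N).mpr hx).tsum_le_tsum hterm (hy'.mul_left _)
    _ ≤ _ := by
        rw [tsum_mul_left]
        gcongr
        exact le_add_of_nonneg_left <| sum_nonneg fun n _ ↦ div_nonneg (hf n) (by positivity)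

lemma le_sum_range_div_of_abs_tsum_div_rpow_sub_le (hf : ∀ n, 0 ≤ f n) {T C : ℝ}
    (hsum : ∀ x : ℝ, 1 < x → Summable fun n : ℕ ↦ f n / (n : ℝ) ^ x)
    (hpole : ∀ x ∈ Set.Ioc (1 : ℝ) 2, |∑' n, f n / (n : ℝ) ^ x - T / (x - 1)| ≤ C)
    {N : ℕ} (hN : 2 ≤ log N) :
    T / 8 * log N - 2 * C ≤ ∑ n ∈ range N, f n / n := by
  have hL : 0 < log N := by linarith
  have hN0 : 0 < N := Nat.pos_of_ne_zero fun h ↦ by simp [h] at hL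
  set s := 1 / log N with hs
  have hs0 : 0 < s := by positivity
  have hs1 : 2 * s ≤ 1 := by rw [hs, ← mul_div_assoc, div_le_one hL]; linarith
  have hC : 0 ≤ C := (abs_nonneg _).trans (hpole 2 ⟨by norm_num, le_rfl⟩)
  have hF₂ : T * log N / 2 - C ≤ ∑' n, f n / (n : ℝ) ^ (1 + 2 * s) := by
    have := (abs_le.mp (hpole (1 + 2 * s) ⟨by linarith, by linarith⟩)).1
    have hpole_part : T / (2 * s) = T * log N / 2 := by rw [hs]; field_simp
    rw [add_sub_cancel_left, hpole_part] at this
    linarith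
  have hF₁ : ∑' n, f n / (n : ℝ) ^ (1 + s) ≤ T * log N + C := by
    have := (abs_le.mp (hpole (1 + s) ⟨by linarith, by linarith⟩)).2
    have hpole_part : T / s = T * log N := by rw [hs]; field_simp
    rw [add_sub_cancel_left, hpole_part] at this
    linarith
  have hF₁_nonneg : 0 ≤ ∑' n, f n / (n : ℝ) ^ (1 + s) :=
    tsum_nonneg fun n ↦ div_nonneg (hf n) (by positivity)
  have hNpow : (N : ℝ) ^ ((1 + s) - (1 + 2 * s)) = exp (-1) := by
    rw [rpow_def_of_pos (by exact_mod_cast hN0), hs]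
    congr 1
    field_simp
    ring
  have hsplit : ∑' n, f n / (n : ℝ) ^ (1 + 2 * s) ≤
      ∑ n ∈ range N, f n / n + exp (-1) * ∑' n, f n / (n : ℝ) ^ (1 + s) := by
    have h₂ := hsum (1 + 2 * s) (by linarith)
    have h₁ := hsum (1 + s) (by linarith)
    refine (tsum_div_rpow_le_sum_range_add hf (by linarith) h₂ h₁ hN0).trans ?_
    rw [hNpow]
    exact add_le_add_left (sum_le_sum fun n _ ↦ div_rpow_le_div (hf n) (by linarith) n) _
  have he : exp (-1) ≤ 3 / 8 := by
    rw [exp_neg, inv_le_comm₀ (exp_pos 1) (by norm_num)]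
    linarith [exp_one_gt_d9]
  nlinarith [mul_le_mul_of_nonneg_right he hF₁_nonneg]

lemma natCast_mul_sum_Ico_div_le_sum_range (hf : ∀ n, 0 ≤ f n) (M N : ℕ) :
    (M : ℝ) * ∑ n ∈ Ico M N, f n / n ≤ ∑ n ∈ range N, f n := by
  rw [mul_sum, range_eq_Ico]
  refine (sum_le_sum fun n hn ↦ ?_).trans
    (sum_le_sum_of_subset_of_nonneg (Ico_subset_Ico_left M.zero_le) fun n _ _ ↦ hf n)
  have hMn : M ≤ n := (mem_Ico.mp hn).1
  rcases n.eq_zero_or_pos with rfl | hn0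
  · simpa [Nat.le_zero.mp hMn] using hf 0
  · calc (M : ℝ) * (f n / n) ≤ n * (f n / n) := by
          gcongr
          exact div_nonneg (hf n) n.cast_nonneg
      _ = f n := by field_simp

lemma eventually_mul_log_le_sum_range (hf : ∀ n, 0 ≤ f n) {c D : ℝ} (hc : 0 < c)
    (hlow : ∀ᶠ N : ℕ in atTop, c * log N - D ≤ ∑ n ∈ range N, f n / n) (R : ℝ) :
    ∀ᶠ N : ℕ in atTop, R * log N ≤ ∑ n ∈ range N, f n := by
  obtain ⟨M, hM⟩ := exists_nat_gt ((R + 1) / c)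
  have hMc : R + 1 ≤ M * c := ((div_lt_iff₀ hc).mp hM).le
  set S : ℕ → ℝ := fun N ↦ ∑ n ∈ range N, f n / n
  have hlog : ∀ᶠ N : ℕ in atTop, M * (D + S M) ≤ log N :=
    (tendsto_log_atTop.comp tendsto_natCast_atTop_atTop).eventually_ge_atTop _
  filter_upwards [hlow, hlog, eventually_ge_atTop M] with N hlowN hlogN hMN
  have hweight := natCast_mul_sum_Ico_div_le_sum_range hf M N
  rw [sum_Ico_eq_sub _ hMN] at hweight
  have hM0 : (0 : ℝ) ≤ M := M.cast_nonneg
  nlinarith [mul_le_mul_of_nonneg_left hlowN hM0,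
    mul_le_mul_of_nonneg_right hMc (log_natCast_nonneg N)]

end NonnegSeries

theorem Nat.sum_filter_range_nth {p : ℕ → Prop} [DecidablePred p] (hp : (Set.ofPred p).Infinite)
    {M : Type*} [AddCommMonoid M] (g : ℕ → M) (k : ℕ) :
    ∑ n ∈ range (nth p k) with p n, g n = ∑ i ∈ range k, g (nth p i) := by
  induction k with
  | zero =>
    rw [sum_range_zero, sum_eq_zero]
    intro n hn
    have hcard := count_nth_zero p
    rw [count_eq_card_filter_range, Finset.card_eq_zero] at hcard
    simp [hcard] at hn
  | succ k ih =>
    rw [filter_range_nth_eq_insert_of_infinite hp, sum_insert (by simp), sum_range_succ, ih,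
      add_comm]

lemma pow_lt_prod_of_mul_log_lt {ι : Type*} {s : Finset ι} {a : ι → ℕ} {b h : ℕ} (hb : 0 < b)
    (ha : ∀ i ∈ s, 0 < a i) (hlog : h * log b < ∑ i ∈ s, log (a i)) :
    b ^ h < ∏ i ∈ s, a i := by
  have hb' : (0 : ℝ) < b := mod_cast hb
  have ha' (i : ι) (hi : i ∈ s) : (0 : ℝ) < a i := mod_cast ha i hi
  rw [← log_pow, ← log_prod fun i hi ↦ (ha' i hi).ne',
    log_lt_log_iff (by positivity) (prod_pos ha')] at hlog
  exact_mod_cast hlog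

namespace ArithmeticFunction.vonMangoldt

variable {q : ℕ} {a : ZMod q}

noncomputable def logPrimeInClass (a : ZMod q) (n : ℕ) : ℝ :=
  if n.Prime ∧ (n : ZMod q) = a then Real.log n else 0

lemma logPrimeInClass_nonneg (n : ℕ) : 0 ≤ logPrimeInClass a n := by
  unfold logPrimeInClass
  split_ifs
  exacts [Real.log_natCast_nonneg n, le_rfl]

lemma residueClass_eq_logPrimeInClass_add (n : ℕ) :
    residueClass a n = logPrimeInClass a n + if n.Prime then 0 else residueClass a n := by
  by_cases hp : n.Prime
  · by_cases hn : (n : ZMod q) = a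
    · simp [logPrimeInClass, hp, hn, vonMangoldt_apply_prime hp]
    · simp [logPrimeInClass, hp, hn]
  · simp [logPrimeInClass, hp]

lemma logPrimeInClass_le_residueClass (n : ℕ) : logPrimeInClass a n ≤ residueClass a n := by
  rw [residueClass_eq_logPrimeInClass_add n]
  refine le_add_of_nonneg_right ?_
  split_ifs
  exacts [le_rfl, residueClass_nonneg a n]

lemma summable_residueClass_div_rpow (a : ZMod q) {x : ℝ} (hx : 1 < x) :
    Summable fun n : ℕ ↦ residueClass a n / (n : ℝ) ^ x :=
  LSeries.summable_real_of_abscissaOfAbsConv_lt <|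
    (abscissaOfAbsConv_residueClass_le_one a).trans_lt <| mod_cast hx

lemma summable_logPrimeInClass_div_rpow (a : ZMod q) {x : ℝ} (hx : 1 < x) :
    Summable fun n : ℕ ↦ logPrimeInClass a n / (n : ℝ) ^ x :=
  (summable_residueClass_div_rpow a hx).of_nonneg_of_le
    (fun n ↦ div_nonneg (logPrimeInClass_nonneg n) (by positivity))
    (fun n ↦ div_le_div_of_nonneg_right (logPrimeInClass_le_residueClass n) (by positivity))

variable [NeZero q]

lemma tsum_residueClass_div_rpow (ha : IsUnit a) {x : ℝ} (hx : 1 < x) :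
    ∑' n, residueClass a n / (n : ℝ) ^ x =
      (LFunctionResidueClassAux a x).re + (q.totient : ℝ)⁻¹ / (x - 1) := by
  refine Complex.ofReal_injective ?_
  simp only [Complex.ofReal_tsum, Complex.ofReal_div, Complex.ofReal_cpow (Nat.cast_nonneg _),
    Complex.ofReal_natCast, Complex.ofReal_add, Complex.ofReal_inv, Complex.ofReal_sub,
    Complex.ofReal_one]
  rw [← LFunctionResidueClassAux_real ha hx,
    eqOn_LFunctionResidueClassAux ha <| Set.mem_ofPred.mpr (Complex.ofReal_re x ▸ hx),
    sub_add_cancel, LSeries]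
  refine tsum_congr fun n ↦ ?_
  rcases eq_or_ne n 0 with rfl | hn
  · simp
  · rw [LSeries.term_of_ne_zero hn]

lemma exists_abs_tsum_residueClass_div_rpow_sub_le (ha : IsUnit a) :
    ∃ C, ∀ x ∈ Set.Ioc (1 : ℝ) 2,
      |∑' n, residueClass a n / (n : ℝ) ^ x - (q.totient : ℝ)⁻¹ / (x - 1)| ≤ C := by
  have hcont : ContinuousOn (fun x : ℝ ↦ (LFunctionResidueClassAux a x).re) (Set.Icc 1 2) :=
    Complex.continuous_re.comp_continuousOn <|
      (continuousOn_LFunctionResidueClassAux a).comp Complex.continuous_ofReal.continuousOn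
        fun x hx ↦ by simpa using hx.1
  obtain ⟨C, hC⟩ := isCompact_Icc.exists_bound_of_continuousOn hcont
  refine ⟨C, fun x hx ↦ ?_⟩
  rw [tsum_residueClass_div_rpow ha hx.1, add_sub_cancel_right]
  exact hC x (Set.mem_Icc_of_Ioc hx)

lemma exists_abs_tsum_logPrimeInClass_div_rpow_sub_le (ha : IsUnit a) :
    ∃ C, ∀ x ∈ Set.Ioc (1 : ℝ) 2,
      |∑' n, logPrimeInClass a n / (n : ℝ) ^ x - (q.totient : ℝ)⁻¹ / (x - 1)| ≤ C := by
  obtain ⟨C, hC⟩ := exists_abs_tsum_residueClass_div_rpow_sub_le ha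
  set g : ℕ → ℝ := fun n ↦ if n.Prime then 0 else residueClass a n
  have hg (n : ℕ) : 0 ≤ g n := by
    simp only [g]
    split_ifs
    exacts [le_rfl, residueClass_nonneg a n]
  refine ⟨C + ∑' n, g n / n, fun x hx ↦ ?_⟩
  have hle (n : ℕ) : g n / (n : ℝ) ^ x ≤ g n / n := div_rpow_le_div (hg n) hx.1.le n
  have hsum_g : Summable fun n : ℕ ↦ g n / (n : ℝ) ^ x :=
    (summable_residueClass_non_primes_div a).of_nonneg_of_le
      (fun n ↦ div_nonneg (hg n) (by positivity)) hle
  have hsplit : ∑' n, residueClass a n / (n : ℝ) ^ x =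
      ∑' n, logPrimeInClass a n / (n : ℝ) ^ x + ∑' n, g n / (n : ℝ) ^ x := by
    rw [← (summable_logPrimeInClass_div_rpow a hx.1).tsum_add hsum_g]
    exact tsum_congr fun n ↦ by rw [residueClass_eq_logPrimeInClass_add n, add_div]
  have hg_nonneg : 0 ≤ ∑' n, g n / (n : ℝ) ^ x :=
    tsum_nonneg fun n ↦ div_nonneg (hg n) (by positivity)
  have hg_le : ∑' n, g n / (n : ℝ) ^ x ≤ ∑' n, g n / n :=
    hsum_g.tsum_le_tsum hle (summable_residueClass_non_primes_div a)
  have := abs_le.mp (hC x hx)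
  rw [abs_le]
  constructor <;> linarith

lemma eventually_mul_log_le_sum_range_logPrimeInClass (ha : IsUnit a) (R : ℝ) :
    ∀ᶠ N : ℕ in atTop, R * Real.log N ≤ ∑ n ∈ range N, logPrimeInClass a n := by
  obtain ⟨C, hC⟩ := exists_abs_tsum_logPrimeInClass_div_rpow_sub_le ha
  have hφ : (0 : ℝ) < (q.totient : ℝ)⁻¹ :=
    inv_pos.mpr (mod_cast Nat.totient_pos.mpr (NeZero.pos q))
  refine eventually_mul_log_le_sum_range logPrimeInClass_nonneg (D := 2 * C)
    (div_pos hφ (by norm_num : (0 : ℝ) < 8)) ?_ R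
  filter_upwards [(tendsto_log_atTop.comp tendsto_natCast_atTop_atTop).eventually_ge_atTop 2]
    with N hN
  exact le_sum_range_div_of_abs_tsum_div_rpow_sub_le logPrimeInClass_nonneg
    (fun _ ↦ summable_logPrimeInClass_div_rpow a) hC hN

lemma sum_range_nth_logPrimeInClass (ha : IsUnit a) (k : ℕ) :
    ∑ n ∈ range (Nat.nth (fun p ↦ p.Prime ∧ (p : ZMod q) = a) k), logPrimeInClass a n =
      ∑ i ∈ range k, Real.log (Nat.nth (fun p ↦ p.Prime ∧ (p : ZMod q) = a) i) := by
  rw [← Nat.sum_filter_range_nth (Nat.infinite_setOfPred_prime_and_eq_mod ha)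
    fun n : ℕ ↦ Real.log n, sum_filter]
  rfl

theorem eventually_nth_pow_lt_prod_range (ha : IsUnit a) (h : ℕ) :
    ∀ᶠ n in atTop, Nat.nth (fun p ↦ p.Prime ∧ (p : ZMod q) = a) n ^ h <
      ∏ i ∈ range n, Nat.nth (fun p ↦ p.Prime ∧ (p : ZMod q) = a) i := by
  have hinf := Nat.infinite_setOfPred_prime_and_eq_mod ha
  have hprime (i : ℕ) := (Nat.nth_mem_of_infinite hinf i).1
  filter_upwards [(Nat.nth_strictMono hinf).tendsto_atTop.eventually
    (eventually_mul_log_le_sum_range_logPrimeInClass ha (h + 1))] with n hn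
  rw [sum_range_nth_logPrimeInClass ha] at hn
  have hlog : 0 < Real.log (Nat.nth (fun p ↦ p.Prime ∧ (p : ZMod q) = a) n) :=
    log_pos (mod_cast (hprime n).one_lt)
  exact pow_lt_prod_of_mul_log_lt (hprime n).pos (fun i _ ↦ (hprime i).pos) (by linarith)

end ArithmeticFunction.vonMangoldt

theorem stmt_15_general (k l : ℕ) (hlk : l < k) (hcop : Nat.gcd k l = 1)
    (h : ℕ) :
    ∃ N : ℕ, 0 < N ∧ ∀ n ≥ N,
      (Nat.nth (fun p => p.Prime ∧ p % k = l) n) ^ h <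
        ∏ i ∈ Finset.range n, Nat.nth (fun p => p.Prime ∧ p % k = l) i := by
  have : NeZero k := ⟨by omega⟩
  have ha : IsUnit (l : ZMod k) := (ZMod.isUnit_iff_coprime l k).mpr (Nat.coprime_comm.mp hcop)
  have hP : (fun p => p.Prime ∧ p % k = l) = fun p : ℕ => p.Prime ∧ (p : ZMod k) = l := by
    ext p
    rw [ZMod.natCast_eq_natCast_iff', Nat.mod_eq_of_lt hlk]
  obtain ⟨N, hN⟩ :=
    eventually_atTop.mp (ArithmeticFunction.vonMangoldt.eventually_nth_pow_lt_prod_range ha h)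
  exact ⟨N + 1, N.succ_pos, fun n hn ↦ hP ▸ hN n (by omega)⟩

theorem stmt_15 (k l : ℕ) (hl : 1 ≤ l) (hlk : l < k) (hcop : Nat.gcd k l = 1)
    (h : ℕ) (hh : 1 < h) :
    ∃ N : ℕ, 0 < N ∧ ∀ n ≥ N,
      (Nat.nth (fun p => p.Prime ∧ p % k = l) n) ^ h <
        ∏ i ∈ Finset.range n, Nat.nth (fun p => p.Prime ∧ p % k = l) i :=
  stmt_15_general k l hlk hcop h
end

section
/- Fix coprime positive integers k, l with 1 ≤ l < k. For any positive integer m, let Q(m) denote the least prime p with p ≡ l (mod k) and gcd(p, m) = 1. For every integer r ≥ 1, there exists a positive integer C such that for all integers m ≥ C, Q(m)^r < m. -/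
/-!
All primes `p ≡ l (mod k)` below `Q(m)` divide `m`, so it suffices that their product eventually
exceeds `N ^ r`, i.e. that `θ(N) = ∑_{p ≤ N, p ≡ l} log p` outgrows every `R log N`.
The analytic input of Dirichlet's theorem bounds `∑_{n ≡ l} Λ(n) / n ^ (1 + ε)` below by
`φ(k)⁻¹ / ε - C`. In that series, prime powers contribute `O(1)`, primes below `T` at most
`T log T`, primes in `[T, N]` at most `θ(N) / T`, and `n > N` at most `4 ε⁻² N ^ (-ε / 2)`.
Choosing `log N = w⁶`, `ε = w⁻⁵` and `T ≈ w²` forces `θ(N) ≳ w⁷`, far above `R log N = R w⁶`.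
-/

open Real Filter Finset
open scoped Topology
open ArithmeticFunction hiding log
open ArithmeticFunction.vonMangoldt

/-- The least prime `≡ l (mod k)` not dividing `m`. -/
noncomputable def leastPrimeModCoprime (k l m : ℕ) : ℕ :=
  sInf {p : ℕ | p.Prime ∧ p % k = l ∧ ¬ p ∣ m}

theorem sum_range_add_rpow_le {y δ : ℝ} (hy : 0 < y) (hδ : 0 < δ) (M : ℕ) :
    ∑ i ∈ range M, (y + ↑(i + 1)) ^ (-1 - δ) ≤ y ^ (-δ) / δ := by
  have hanti : AntitoneOn (fun t : ℝ => t ^ (-1 - δ)) (Set.Icc y (y + M)) :=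
    fun s hs t _ hst => rpow_le_rpow_of_nonpos (hy.trans_le hs.1) hst (by linarith)
  have hint : ∫ t in y..y + M, t ^ (-1 - δ) = (y ^ (-δ) - (y + M) ^ (-δ)) / δ := by
    rw [integral_rpow (Or.inr ⟨by linarith, fun h => by
      have := (Set.uIcc_of_le (by simp : y ≤ y + M) ▸ h).1; linarith⟩)]
    rw [show -1 - δ + 1 = -δ by ring]
    field_simp
    ring
  calc _ ≤ ∫ t in y..y + M, t ^ (-1 - δ) := hanti.sum_le_integral
    _ ≤ y ^ (-δ) / δ := by
      rw [hint]
      gcongr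
      linarith [rpow_nonneg (by positivity : (0:ℝ) ≤ y + M) (-δ)]

theorem tsum_div_rpow_tail_le {f : ℕ → ℝ} (hf₀ : ∀ n, 0 ≤ f n) (hf : ∀ n, f n ≤ log n)
    {ε : ℝ} (hε : 0 < ε) {N : ℕ} (hN : 0 < N) :
    ∑' n, f (n + (N + 1)) / ((n + (N + 1) : ℕ) : ℝ) ^ (1 + ε)
      ≤ 4 / ε ^ 2 * (N : ℝ) ^ (-(ε / 2)) := by
  refine tsum_le_of_sum_range_le (fun n => by positivity [hf₀ (n + (N + 1))]) fun M => ?_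
  have hterm (i : ℕ) : f (i + (N + 1)) / ((i + (N + 1) : ℕ) : ℝ) ^ (1 + ε)
      ≤ 2 / ε * ((N : ℝ) + ↑(i + 1)) ^ (-1 - ε / 2) := by
    have hpos : (0 : ℝ) < ((i + (N + 1) : ℕ) : ℝ) := by positivity
    have hcast : ((N : ℝ) + ↑(i + 1)) = ((i + (N + 1) : ℕ) : ℝ) := by push_cast; ring
    rw [hcast, div_le_iff₀ (rpow_pos_of_pos hpos _), mul_assoc, ← rpow_add hpos]
    calc f (i + (N + 1)) ≤ ((i + (N + 1) : ℕ) : ℝ) ^ (ε / 2) / (ε / 2) :=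
          (hf _).trans (log_le_rpow_div hpos.le (by positivity))
      _ = _ := by rw [show -1 - ε / 2 + (1 + ε) = ε / 2 by ring]; field_simp
  calc _ ≤ ∑ i ∈ range M, 2 / ε * ((N : ℝ) + ↑(i + 1)) ^ (-1 - ε / 2) :=
        sum_le_sum fun i _ => hterm i
    _ ≤ 2 / ε * ((N : ℝ) ^ (-(ε / 2)) / (ε / 2)) := by
      rw [← mul_sum]; gcongr; exact sum_range_add_rpow_le (by positivity) (by positivity) M
    _ = _ := by field_simp; ring

theorem div_natCast_rpow_le_div {b x : ℝ} (hb : 0 ≤ b) (hx : 1 ≤ x) (n : ℕ) :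
    b / (n : ℝ) ^ x ≤ b / n := by
  rcases n.eq_zero_or_pos with rfl | hn
  · simp [zero_rpow (by linarith : x ≠ 0)]
  · refine div_le_div_of_nonneg_left hb (by positivity) ?_
    simpa using rpow_le_rpow_of_exponent_le (Nat.one_le_cast.mpr hn) hx

theorem eventually_const_add_le_mul_pow_five (B : ℝ) {c : ℝ} (hc : 0 < c) :
    ∀ᶠ w : ℝ in atTop, B + (w ^ 2 + 1) ^ 2 + 4 * w ^ 10 * exp (-(w / 2)) ≤ c * w ^ 5 := by
  have hconst (b : ℝ) : (fun _ => b) =o[atTop] fun w : ℝ => w ^ 5 :=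
    Asymptotics.isLittleO_const_left.mpr <| .inr <|
      tendsto_norm_atTop_atTop.comp (tendsto_pow_atTop (by norm_num))
  have hpoly : (fun w : ℝ => (w ^ 2 + 1) ^ 2) =o[atTop] fun w => w ^ 5 := by
    refine Asymptotics.IsBigO.trans_isLittleO (g := fun w : ℝ => w ^ 4) ?_
      (Asymptotics.isLittleO_pow_pow_atTop_of_lt (by norm_num))
    refine .of_bound 4 ?_
    filter_upwards [eventually_ge_atTop 1] with w hw
    simp only [norm_pow, Real.norm_eq_abs, abs_of_nonneg (zero_le_one.trans hw),
      abs_of_pos (by positivity : 0 < w ^ 2 + 1)]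
    nlinarith [one_le_pow₀ (n := 2) hw]
  have hexp : (fun w : ℝ => 4 * w ^ 10 * exp (-(w / 2))) =o[atTop] fun w => w ^ 5 := by
    have hlim : Tendsto (fun w : ℝ => 4 * 2 ^ 10 * ((w / 2) ^ 10 * exp (-(w / 2)))) atTop (𝓝 0) :=
      ((tendsto_pow_mul_exp_neg_atTop_nhds_zero 10).comp
        (tendsto_id.atTop_div_const (by norm_num))).const_mul _ |>.trans (by simp)
    exact ((Asymptotics.isLittleO_one_iff ℝ).mpr (hlim.congr fun w => by ring)).trans (hconst 1)
  filter_upwards [((hconst B).add hpoly).add hexp |>.bound hc, eventually_ge_atTop 0]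
    with w hw hw₀
  rw [Real.norm_eq_abs, norm_pow, Real.norm_eq_abs, abs_of_nonneg hw₀] at hw
  exact (le_abs_self _).trans hw

noncomputable def thetaMod {q : ℕ} (a : ZMod q) (N : ℕ) : ℝ :=
  ∑ p ∈ range (N + 1) with Nat.Prime p ∧ (p : ZMod q) = a, log p

section

variable {q : ℕ} (a : ZMod q)

theorem sum_range_residueClass_prime_eq_thetaMod (N : ℕ) :
    ∑ n ∈ range (N + 1), (if n.Prime then residueClass a n else 0) = thetaMod a N := by
  rw [thetaMod, sum_filter]
  refine sum_congr rfl fun n _ => ?_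
  by_cases hn : n.Prime
  · by_cases hna : (n : ZMod q) = a <;> simp [hn, hna, vonMangoldt_apply_prime]
  · simp [hn]

theorem thetaMod_eq_log_prod (N : ℕ) :
    thetaMod a N = log (∏ p ∈ range (N + 1) with Nat.Prime p ∧ (p : ZMod q) = a, p : ℕ) := by
  rw [thetaMod, Nat.cast_prod, log_prod fun p hp => by
    exact_mod_cast (mem_filter.mp hp).2.1.ne_zero]

theorem residueClass_div_rpow_le {x : ℝ} (hx : 1 ≤ x) {T : ℕ} (hT : 0 < T) (n : ℕ) :
    residueClass a n / (n : ℝ) ^ x ≤ (if n.Prime then 0 else residueClass a n) / (n : ℝ)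
      + (if n < T then log T else 0) + (if n.Prime then residueClass a n else 0) / (T : ℝ) := by
  have h₀ := residueClass_nonneg a n
  refine (div_natCast_rpow_le_div h₀ hx n).trans ?_
  by_cases hn : n.Prime
  · simp only [hn, if_true, zero_div, zero_add]
    have hn₀ : (0 : ℝ) < n := by exact_mod_cast hn.pos
    split_ifs with hnT
    · have hle : residueClass a n ≤ log T :=
        (residueClass_le a n).trans <| vonMangoldt_le_log.trans <|
          log_le_log hn₀ (by exact_mod_cast hnT.le)
      have : residueClass a n / n ≤ residueClass a n :=
        div_le_self h₀ (by exact_mod_cast hn.one_lt.le)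
      linarith [div_nonneg h₀ (Nat.cast_nonneg T)]
    · simp only [zero_add]
      exact div_le_div_of_nonneg_left h₀ (by exact_mod_cast hT) (by exact_mod_cast not_lt.mp hnT)
  · simp only [hn, if_false, zero_div, add_zero, le_add_iff_nonneg_right]
    have := log_natCast_nonneg T
    split_ifs <;> positivity

theorem sum_range_residueClass_div_rpow_le {x : ℝ} (hx : 1 ≤ x) {T : ℕ} (hT : 0 < T) (N : ℕ) :
    ∑ n ∈ range (N + 1), residueClass a n / (n : ℝ) ^ x
      ≤ ∑' n : ℕ, (if n.Prime then 0 else residueClass a n) / (n : ℝ) + T * log T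
        + thetaMod a N / (T : ℝ) := by
  have hnp : ∑ n ∈ range (N + 1), (if n.Prime then 0 else residueClass a n) / (n : ℝ)
      ≤ ∑' n : ℕ, (if n.Prime then 0 else residueClass a n) / (n : ℝ) :=
    (summable_residueClass_non_primes_div a).sum_le_tsum _ fun n _ => by
      positivity [residueClass_nonneg a n]
  have hsmall : ∑ n ∈ range (N + 1), (if n < T then log T else 0) ≤ T * log T := by
    rw [← sum_filter]
    calc _ ≤ ∑ _n ∈ range T, log T :=
          sum_le_sum_of_subset_of_nonneg (fun n hn => by simpa using (mem_filter.mp hn).2)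
            fun _ _ _ => log_natCast_nonneg T
      _ = _ := by simp
  calc _ ≤ ∑ n ∈ range (N + 1), ((if n.Prime then 0 else residueClass a n) / (n : ℝ)
        + (if n < T then log T else 0) + (if n.Prime then residueClass a n else 0) / (T : ℝ)) :=
        sum_le_sum fun n _ => residueClass_div_rpow_le a hx hT n
    _ ≤ _ := by
      rw [sum_add_distrib, sum_add_distrib, ← sum_div, sum_range_residueClass_prime_eq_thetaMod]
      linarith

variable [NeZero q] {a}

theorem exists_inv_totient_div_sub_le (ha : IsUnit a) :
    ∃ B : ℝ, ∀ ε : ℝ, 0 < ε → ε ≤ 1 → ∀ N T : ℕ, 0 < N → 0 < T →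
      (q.totient : ℝ)⁻¹ / ε - B
        ≤ T * log T + thetaMod a N / T + 4 / ε ^ 2 * (N : ℝ) ^ (-(ε / 2)) := by
  obtain ⟨C, hC⟩ := LSeries_residueClass_lower_bound ha
  refine ⟨C + ∑' n : ℕ, (if n.Prime then 0 else residueClass a n) / (n : ℝ),
    fun ε hε hε₁ N T hN hT => ?_⟩
  have hsum : Summable fun n : ℕ => residueClass a n / (n : ℝ) ^ (1 + ε) :=
    LSeries.summable_real_of_abscissaOfAbsConv_lt <|
      (abscissaOfAbsConv_residueClass_le_one a).trans_lt <| by norm_cast; linarith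
  have hlower := hC (x := 1 + ε) ⟨by linarith, by linarith⟩
  rw [add_sub_cancel_left, ← hsum.sum_add_tsum_nat_add (N + 1)] at hlower
  have hhead := sum_range_residueClass_div_rpow_le a (by linarith : (1 : ℝ) ≤ 1 + ε) hT N
  have htail := tsum_div_rpow_tail_le (residueClass_nonneg a)
    (fun n => (residueClass_le a n).trans vonMangoldt_le_log) hε hN
  linarith

theorem eventually_mul_log_lt_thetaMod (ha : IsUnit a) (R : ℝ) :
    ∀ᶠ N : ℕ in atTop, R * log N < thetaMod a N := by
  obtain ⟨B, hB⟩ := exists_inv_totient_div_sub_le ha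
  set c : ℝ := (q.totient : ℝ)⁻¹
  have hc : 0 < c := inv_pos.mpr <| by exact_mod_cast Nat.totient_pos.mpr (NeZero.pos q)
  have hw : Tendsto (fun N : ℕ => log N ^ (6⁻¹ : ℝ)) atTop atTop :=
    (tendsto_rpow_atTop (by norm_num)).comp (tendsto_log_atTop.comp tendsto_natCast_atTop_atTop)
  filter_upwards [hw.eventually (eventually_const_add_le_mul_pow_five B (half_pos hc)),
    hw.eventually_ge_atTop 1,
    hw.eventually_gt_atTop (2 * R / c), eventually_gt_atTop 0] with N hsmallN hw₁ hwR hN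
  set w := log N ^ (6⁻¹ : ℝ)
  have hlog : log N = w ^ 6 := by
    simpa using (rpow_inv_natCast_pow (log_natCast_nonneg N) (n := 6) (by norm_num)).symm
  set T := ⌈w ^ 2⌉₊
  have hT : w ^ 2 ≤ T := Nat.le_ceil _
  have hT₀ : 0 < T := Nat.ceil_pos.mpr (by positivity)
  have hTlog : T * log T ≤ (w ^ 2 + 1) ^ 2 := by
    have hTw : (T : ℝ) ≤ w ^ 2 + 1 := (Nat.ceil_lt_add_one (by positivity)).le
    calc (T : ℝ) * log T ≤ T * T := by gcongr; exact log_le_self (Nat.cast_nonneg T)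
      _ ≤ _ := by rw [sq]; gcongr
  have hexp : (N : ℝ) ^ (-((w ^ 5)⁻¹ / 2)) = exp (-(w / 2)) := by
    rw [rpow_def_of_pos (by exact_mod_cast hN), hlog]
    congr 1
    field_simp
  have key := hB (w ^ 5)⁻¹ (by positivity) (inv_le_one_of_one_le₀ (one_le_pow₀ hw₁)) N T hN hT₀
  rw [hexp, div_inv_eq_mul, inv_pow, ← pow_mul, div_inv_eq_mul] at key
  have hθ : c / 2 * w ^ 5 ≤ thetaMod a N / T := by linarith
  calc R * log N = R * w ^ 6 := by rw [hlog]
    _ < c / 2 * w ^ 5 * w ^ 2 := by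
      rw [div_lt_iff₀ hc] at hwR
      nlinarith [pow_pos (zero_lt_one.trans_le hw₁) 6]
    _ ≤ thetaMod a N / T * T :=
      mul_le_mul hθ hT (by positivity) ((by positivity : (0:ℝ) ≤ c / 2 * w ^ 5).trans hθ)
    _ = thetaMod a N := div_mul_cancel₀ _ (by exact_mod_cast hT₀.ne')

theorem eventually_pow_lt_prod_primes_mod (ha : IsUnit a) (r : ℕ) :
    ∀ᶠ N in atTop, N ^ r < ∏ p ∈ range N with Nat.Prime p ∧ (p : ZMod q) = a, p := by
  have hsucc : ∀ᶠ N in atTop,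
      (N + 1) ^ r < ∏ p ∈ range (N + 1) with Nat.Prime p ∧ (p : ZMod q) = a, p := by
    filter_upwards [eventually_mul_log_lt_thetaMod ha ((2 * r : ℕ) : ℝ), eventually_ge_atTop 2]
      with N hθ hN
    have hprod : 0 < ∏ p ∈ range (N + 1) with Nat.Prime p ∧ (p : ZMod q) = a, p :=
      prod_pos fun p hp => (mem_filter.mp hp).2.1.pos
    refine lt_of_le_of_lt (b := N ^ (2 * r)) ?_ ?_
    · rw [pow_mul]
      exact Nat.pow_le_pow_left (by nlinarith) r
    · rw [thetaMod_eq_log_prod, ← log_pow, ← Nat.cast_pow] at hθ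
      exact_mod_cast (log_lt_log_iff (by positivity) (by exact_mod_cast hprod)).mp hθ
  filter_upwards [(tendsto_sub_atTop_nat 1).eventually hsucc, eventually_ge_atTop 1] with N h hN
  rwa [Nat.sub_add_cancel hN] at h

end

theorem prod_primes_lt_leastPrimeModCoprime_dvd (k l m : ℕ) :
    ∏ p ∈ range (leastPrimeModCoprime k l m) with Nat.Prime p ∧ p % k = l, p ∣ m := by
  refine prod_primes_dvd m (fun p hp => (mem_filter.mp hp).2.1.prime) fun p hp => ?_
  obtain ⟨hlt, hp, hpl⟩ := mem_filter.mp hp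
  by_contra hdvd
  exact (mem_range.mp hlt).not_ge
    (Nat.sInf_le (show p ∈ {p : ℕ | p.Prime ∧ p % k = l ∧ ¬ p ∣ m} from ⟨hp, hpl, hdvd⟩))

theorem stmt_16_general (k l : ℕ) (hlk : l < k) (hcop : Nat.gcd k l = 1)
    (r : ℕ) :
    ∃ C : ℕ, 0 < C ∧ ∀ m : ℕ, C ≤ m → (leastPrimeModCoprime k l m) ^ r < m := by
  have : NeZero k := ⟨by omega⟩
  have ha : IsUnit (l : ZMod k) := (ZMod.isUnit_iff_coprime l k).mpr (Nat.coprime_comm.mp hcop)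
  have hmod (p : ℕ) : (p : ZMod k) = l ↔ p % k = l := by
    rw [ZMod.natCast_eq_natCast_iff', Nat.mod_eq_of_lt hlk]
  obtain ⟨N₀, hN₀⟩ := eventually_atTop.mp (eventually_pow_lt_prod_primes_mod ha r)
  refine ⟨N₀ ^ r + 1, Nat.succ_pos _, fun m hm => ?_⟩
  rcases lt_or_ge (leastPrimeModCoprime k l m) N₀ with hsmall | hlarge
  · exact (Nat.pow_le_pow_left hsmall.le r).trans_lt hm
  · calc leastPrimeModCoprime k l m ^ r
        < ∏ p ∈ range (leastPrimeModCoprime k l m) with Nat.Prime p ∧ (p : ZMod k) = l, p :=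
          hN₀ _ hlarge
      _ = ∏ p ∈ range (leastPrimeModCoprime k l m) with Nat.Prime p ∧ p % k = l, p := by
          simp only [hmod]
      _ ≤ m := Nat.le_of_dvd (by omega) (prod_primes_lt_leastPrimeModCoprime_dvd k l m)

theorem stmt_16 (k l : ℕ) (hl : 1 ≤ l) (hlk : l < k) (hcop : Nat.gcd k l = 1)
    (r : ℕ) (hr : 1 ≤ r) :
    ∃ C : ℕ, 0 < C ∧ ∀ m : ℕ, C ≤ m → (leastPrimeModCoprime k l m) ^ r < m :=
  stmt_16_general k l hlk hcop r
end

section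
/- Suppose Goldbach's conjecture in the form: every even integer 2n with n > 3 is the sum of two distinct primes. Then for every integer n > 6 there exists an odd prime p_r < n with gcd(p_r, n) = 1 such that 2n − p_r is coprime to 2n − p for every odd prime p < n with p ≠ p_r. -/
lemma stmt_19_aux (n p q : ℕ) (hn : 6 < n) (hp : p.Prime) (hq : q.Prime)
    (hlt : p < q) (hsum : 2 * n = p + q) :
    ∃ pr : ℕ, pr.Prime ∧ Odd pr ∧ pr < n ∧ Nat.gcd pr n = 1 ∧
      ∀ p' : ℕ, p'.Prime → Odd p' → p' < n → p' ≠ pr →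
        Nat.gcd (2 * n - pr) (2 * n - p') = 1 := by
  have hpn : p < n := by omega
  have hqn : n < q := by omega
  have hpodd : Odd p := by
    rcases hp.eq_two_or_odd' with h2 | ho
    · exfalso
      have hqe : Even q := ⟨n - 1, by omega⟩
      have : q = 2 := (Nat.Prime.even_iff hq).mp hqe
      omega
    · exact ho
  refine ⟨p, hp, hpodd, hpn, ?_, ?_⟩
  · refine (Nat.Prime.coprime_iff_not_dvd hp).mpr ?_
    intro hdvd
    have h2n : p ∣ 2 * n := Dvd.dvd.mul_left hdvd 2
    have hpq : p ∣ q := (Nat.dvd_add_right dvd_rfl).mp (hsum ▸ h2n)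
    have := (Nat.prime_dvd_prime_iff_eq hp hq).mp hpq
    omega
  · intro p' hp' hodd' hlt' hne'
    have hqe : 2 * n - p = q := by omega
    rw [hqe]
    refine (Nat.Prime.coprime_iff_not_dvd hq).mpr ?_
    intro hdvd
    obtain ⟨k, hk⟩ := hdvd
    have hppos : 0 < p' := hp'.pos
    have hk1 : k = 1 := by
      rcases Nat.lt_or_ge k 2 with h | h
      · interval_cases k <;> omega
      · exfalso
        have h2 : q * 2 ≤ q * k := Nat.mul_le_mul_left q h
        omega
    subst hk1
    simp at hk
    omega

theorem stmt_19
    (goldbach : ∀ n : ℕ, 3 < n → ∃ p q : ℕ, p.Prime ∧ q.Prime ∧ p ≠ q ∧ 2 * n = p + q) :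
    ∀ n : ℕ, 6 < n → ∃ pr : ℕ, pr.Prime ∧ Odd pr ∧ pr < n ∧ Nat.gcd pr n = 1 ∧
      ∀ p : ℕ, p.Prime → Odd p → p < n → p ≠ pr →
        Nat.gcd (2 * n - pr) (2 * n - p) = 1 := by
  intro n hn
  obtain ⟨p, q, hp, hq, hne, hsum⟩ := goldbach n (by omega)
  rcases lt_or_gt_of_ne hne with h | h
  · exact stmt_19_aux n p q hn hp hq h hsum
  · exact stmt_19_aux n q p hn hq hp h (by omega)
end
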